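/- In the q-Brauer algebra Br_n(r,q), for all j, k with 1 ≤ j ≤ k and 2k ≤ n, one has e_{(j)} e_{(k)} = e_{(k)} e_{(j)} = δ^{j} · e_{(k)}. -/

import Mathlib

noncomputable section

namespace qB

/-- Generators of the q-Brauer algebra: `g i` (intended for `1 ≤ i ≤ n-1`) and `e`. -/
inductive BrGen : Type
  | g : ℕ → BrGen
  | e : BrGen

/-- The generator `g i` inside the free algebra. -/
def fg (R : Type) [CommRing R] (i : ℕ) : FreeAlgebra R BrGen := FreeAlgebra.ι R (BrGen.g i)

/-- The generator `e` inside the free algebra. -/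
def fe (R : Type) [CommRing R] : FreeAlgebra R BrGen := FreeAlgebra.ι R BrGen.e

/-- The element `g i ⁻¹ = q⁻¹ g i + (q⁻¹ - 1)·1` inside the free algebra (`qi = q⁻¹`). -/
def fgInv (R : Type) [CommRing R] (qi : R) (i : ℕ) : FreeAlgebra R BrGen :=
  qi • fg R i + (qi - 1) • (1 : FreeAlgebra R BrGen)

/-- The word `g 2 * g 3 * (g 1)⁻¹ * (g 2)⁻¹`. -/
def fE2w (R : Type) [CommRing R] (qi : R) : FreeAlgebra R BrGen :=
  fg R 2 * fg R 3 * fgInv R qi 1 * fgInv R qi 2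

/-- Defining relations of the q-Brauer algebra `Br_n(r,q)`; out-of-range generators are
killed (relation `zero`), so the algebra is presented exactly on `g 1, …, g (n-1), e`. -/
inductive BrRel (R : Type) [CommRing R] (n : ℕ) (q qi r δ : R) :
    FreeAlgebra R BrGen → FreeAlgebra R BrGen → Prop
  | zero (i : ℕ) (h : i = 0 ∨ n ≤ i) : BrRel R n q qi r δ (fg R i) 0
  | quad (i : ℕ) (h1 : 1 ≤ i) (h2 : i < n) :
      BrRel R n q qi r δ (fg R i * fg R i)
        ((q - 1) • fg R i + q • (1 : FreeAlgebra R BrGen))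
  | comm (i j : ℕ) (h1 : 1 ≤ i) (h2 : i + 1 < j) (h3 : j < n) :
      BrRel R n q qi r δ (fg R i * fg R j) (fg R j * fg R i)
  | braid (i : ℕ) (h1 : 1 ≤ i) (h2 : i + 1 < n) :
      BrRel R n q qi r δ (fg R i * fg R (i + 1) * fg R i)
        (fg R (i + 1) * fg R i * fg R (i + 1))
  | e1 : BrRel R n q qi r δ (fe R * fe R) (δ • fe R)
  | e2comm (i : ℕ) (h1 : 3 ≤ i) (h2 : i < n) :
      BrRel R n q qi r δ (fe R * fg R i) (fg R i * fe R)
  | e2g1 (h : 2 ≤ n) : BrRel R n q qi r δ (fe R * fg R 1) (q • fe R)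
  | e2g2 (h : 3 ≤ n) : BrRel R n q qi r δ (fe R * fg R 2 * fe R) (r • fe R)
  | e2g2inv (h : 3 ≤ n) : BrRel R n q qi r δ (fe R * fgInv R qi 2 * fe R) (qi • fe R)
  | e3l (h : 4 ≤ n) :
      BrRel R n q qi r δ (fE2w R qi * (fe R * fE2w R qi * fe R)) (fe R * fE2w R qi * fe R)
  | e3r (h : 4 ≤ n) :
      BrRel R n q qi r δ ((fe R * fE2w R qi * fe R) * fE2w R qi) (fe R * fE2w R qi * fe R)

/-- The q-Brauer algebra `Br_n(r,q)` over `R`, with `qi = q⁻¹` and `δ = (r-1)/(q-1)`. -/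
abbrev QBr (R : Type) [CommRing R] (n : ℕ) (q qi r δ : R) : Type :=
  RingQuot (BrRel R n q qi r δ)

/-- The generator `g i` of the q-Brauer algebra. -/
def G (R : Type) [CommRing R] (n : ℕ) (q qi r δ : R) (i : ℕ) : QBr R n q qi r δ :=
  RingQuot.mkAlgHom R (BrRel R n q qi r δ) (fg R i)

/-- The generator `e` of the q-Brauer algebra. -/
def E (R : Type) [CommRing R] (n : ℕ) (q qi r δ : R) : QBr R n q qi r δ :=
  RingQuot.mkAlgHom R (BrRel R n q qi r δ) (fe R)

/-- The inverse `(g i)⁻¹ = q⁻¹ g i + (q⁻¹-1)` of the generator `g i`. -/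
def GInv (R : Type) [CommRing R] (n : ℕ) (q qi r δ : R) (i : ℕ) : QBr R n q qi r δ :=
  RingQuot.mkAlgHom R (BrRel R n q qi r δ) (fgInv R qi i)

/-- Ascending product `g a * g (a+1) * ⋯ * g b` (equal to `1` when `b < a`). -/
def ga (R : Type) [CommRing R] (n : ℕ) (q qi r δ : R) (a b : ℕ) : QBr R n q qi r δ :=
  ((List.range' a (b + 1 - a)).map (G R n q qi r δ)).prod

/-- Ascending product of inverses `(g a)⁻¹ * (g (a+1))⁻¹ * ⋯ * (g b)⁻¹`. -/
def gaInv (R : Type) [CommRing R] (n : ℕ) (q qi r δ : R) (a b : ℕ) : QBr R n q qi r δ :=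
  ((List.range' a (b + 1 - a)).map (GInv R n q qi r δ)).prod

/-- Descending product `g a * g (a-1) * ⋯ * g b` (equal to `1` when `a < b`). -/
def gd (R : Type) [CommRing R] (n : ℕ) (q qi r δ : R) (a b : ℕ) : QBr R n q qi r δ :=
  ((List.range' b (a + 1 - b)).reverse.map (G R n q qi r δ)).prod

/-- Descending product of inverses `(g a)⁻¹ * (g (a-1))⁻¹ * ⋯ * (g b)⁻¹`. -/
def gdInv (R : Type) [CommRing R] (n : ℕ) (q qi r δ : R) (a b : ℕ) : QBr R n q qi r δ :=
  ((List.range' b (a + 1 - b)).reverse.map (GInv R n q qi r δ)).prod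

/-- The elements `e_(k)`: `e_(0) = 1`, `e_(1) = e`,
`e_(k+1) = e * (g 2 ⋯ g (2k+1)) * (g 1)⁻¹ ⋯ (g 2k)⁻¹ * e_(k)`. -/
def ek (R : Type) [CommRing R] (n : ℕ) (q qi r δ : R) : ℕ → QBr R n q qi r δ
  | 0 => 1
  | k + 1 => E R n q qi r δ * ga R n q qi r δ 2 (2 * k + 1) *
      gaInv R n q qi r δ 1 (2 * k) * ek R n q qi r δ k

end qB



/-!
Write `e_(k+1) = e · w_k · e_(k)` with `w_k = g_2 ⋯ g_{2k+1} · g_1⁻¹ ⋯ g_{2k}⁻¹`. By the braid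
relations, conjugation by `w_m` raises the index of each of `g_1, …, g_{2m-1}` by two, so
`w_m w_j = w_j' w_m` for `j < m`, where `w_j'` is `w_j` with all indices raised by two; moreover
`w_{j+1} = w_1 w_j'` and `w_j'` commutes with `e`. With these, relation (E3),
`w_1 e w_1 e = e w_1 e = e w_1 e w_1`, propagates to `w_j e_(k) = e_(k) = e_(k) w_j` for all
`j < k`. Then, by induction on `j`,
`e_(j+1) e_(k) = e w_j e_(j) e_(k) = δ^j e w_j e_(k) = δ^j e e_(k) = δ^(j+1) e_(k)`,
and symmetrically on the other side.
-/

namespace qB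

theorem _root_.SemiconjBy.list_prod_map {M ι : Type*} [Monoid M] {a : M} {f g : ι → M}
    {l : List ι} (h : ∀ j ∈ l, SemiconjBy a (f j) (g j)) :
    SemiconjBy a (l.map f).prod (l.map g).prod := by
  induction l with
  | nil => exact SemiconjBy.one_right a
  | cons j l ih =>
    simp only [List.map_cons, List.prod_cons]
    exact (h j (by simp)).mul_right (ih fun i hi => h i (by simp [hi]))

theorem prod_map_Ico_add {M : Type*} [Monoid M] (f : ℕ → M) (a b k : ℕ) :
    ((List.Ico a b).map fun j => f (j + k)).prod = ((List.Ico (a + k) (b + k)).map f).prod := by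
  rw [← List.Ico.map_add, List.map_map]
  simp only [Function.comp_def, add_comm k]

theorem semiconjBy_prod_Ico_of_braid {M : Type*} [Monoid M] {f : ℕ → M} {a b i : ℕ} {x y : M}
    (hai : a ≤ i) (hib : i + 2 ≤ b) (hbraid : SemiconjBy (f i * f (i + 1)) x y)
    (hlow : ∀ j, a ≤ j → j < i → Commute (f j) y)
    (hhigh : ∀ j, i + 2 ≤ j → j < b → Commute (f j) x) :
    SemiconjBy ((List.Ico a b).map f).prod x y := by
  have hpair : List.Ico i (i + 2) = [i, i + 1] := by simp [List.Ico, List.range'_succ]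
  have hsplit : List.Ico a b = List.Ico a i ++ ([i, i + 1] ++ List.Ico (i + 2) b) := by
    rw [← hpair, List.Ico.append_consecutive (by omega) hib,
      List.Ico.append_consecutive hai (by omega)]
  have hP1 : Commute ((List.Ico a i).map f).prod y :=
    Commute.list_prod_left _ _ <| List.forall_mem_map.2 fun j hj =>
      hlow j (List.Ico.mem.1 hj).1 (List.Ico.mem.1 hj).2
  have hP3 : Commute ((List.Ico (i + 2) b).map f).prod x :=
    Commute.list_prod_left _ _ <| List.forall_mem_map.2 fun j hj =>
      hhigh j (List.Ico.mem.1 hj).1 (List.Ico.mem.1 hj).2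
  rw [hsplit]
  simpa only [List.map_append, List.prod_append, List.map_cons, List.map_nil, List.prod_cons,
    List.prod_nil, mul_one] using SemiconjBy.mul_left hP1 (hbraid.mul_left hP3)

theorem semiconjBy_inv_mul_inv_of_braid {G : Type*} [Group G] {a b : G}
    (h : SemiconjBy (a * b) a b) : SemiconjBy (a⁻¹ * b⁻¹) a b := by
  rw [← mul_inv_rev, SemiconjBy.inv_symm_left_iff]
  simpa only [SemiconjBy, mul_assoc] using h.symm

section

variable {R : Type} [CommRing R] {n : ℕ} {q qi r δ : R}

local notation "𝐠" => G R n q qi r δ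
local notation "𝐠⁻¹" => GInv R n q qi r δ
local notation "𝐆" => ga R n q qi r δ
local notation "𝐆⁻¹" => gaInv R n q qi r δ
local notation "𝐞" => E R n q qi r δ
local notation "𝐞₍" k "₎" => ek R n q qi r δ k

-- Out-of-range generators vanish, so the commutation and braid relations below need no bounds.
theorem G_eq_zero {i : ℕ} (h : i = 0 ∨ n ≤ i) : 𝐠 i = 0 := by
  simpa [G] using RingQuot.mkAlgHom_rel R (BrRel.zero (q := q) (qi := qi) (r := r) (δ := δ) i h)

theorem G_mul_self {i : ℕ} (h1 : 1 ≤ i) (h2 : i < n) :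
    𝐠 i * 𝐠 i = (q - 1) • 𝐠 i + q • 1 := by
  simpa [G] using
    RingQuot.mkAlgHom_rel R (BrRel.quad (q := q) (qi := qi) (r := r) (δ := δ) i h1 h2)

theorem commute_G {i j : ℕ} (h : i + 2 ≤ j) : Commute (𝐠 i) (𝐠 j) := by
  rcases Nat.eq_zero_or_pos i with rfl | hi
  · simp [G_eq_zero (Or.inl rfl)]
  rcases lt_or_ge j n with hj | hj
  · simpa [Commute, SemiconjBy, G] using RingQuot.mkAlgHom_rel R
      (BrRel.comm (q := q) (qi := qi) (r := r) (δ := δ) i j hi (by omega) hj)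
  · simp [G_eq_zero (Or.inr hj)]

theorem semiconjBy_G_mul_G (i : ℕ) :
    SemiconjBy (𝐠 i * 𝐠 (i + 1)) (𝐠 i) (𝐠 (i + 1)) := by
  rcases Nat.eq_zero_or_pos i with rfl | hi
  · simp [G_eq_zero (Or.inl rfl)]
  rcases lt_or_ge (i + 1) n with hin | hin
  · simpa [SemiconjBy, G, mul_assoc] using RingQuot.mkAlgHom_rel R
      (BrRel.braid (q := q) (qi := qi) (r := r) (δ := δ) i hi (by omega))
  · simp [G_eq_zero (Or.inr hin)]

theorem E_mul_E : 𝐞 * 𝐞 = δ • 𝐞 := by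
  simpa [E] using
    RingQuot.mkAlgHom_rel R (BrRel.e1 (n := n) (q := q) (qi := qi) (r := r) (δ := δ))

theorem commute_E_G {i : ℕ} (h : 3 ≤ i) : Commute 𝐞 (𝐠 i) := by
  rcases lt_or_ge i n with hi | hi
  · simpa [Commute, SemiconjBy, E, G] using RingQuot.mkAlgHom_rel R
      (BrRel.e2comm (q := q) (qi := qi) (r := r) (δ := δ) i h hi)
  · simp [G_eq_zero (Or.inr hi)]

theorem GInv_eq (i : ℕ) : 𝐠⁻¹ i = qi • 𝐠 i + (qi - 1) • 1 := by
  simp [GInv, G, fgInv]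

theorem semiconjBy_GInv {x : QBr R n q qi r δ} {i j : ℕ} (h : SemiconjBy x (𝐠 i) (𝐠 j)) :
    SemiconjBy x (𝐠⁻¹ i) (𝐠⁻¹ j) := by
  rw [GInv_eq, GInv_eq]
  exact (h.smul_right qi).add_right ((SemiconjBy.one_right x).smul_right (qi - 1))

theorem G_mul_GInv (hq : q * qi = 1) {i : ℕ} (h1 : 1 ≤ i) (h2 : i < n) :
    𝐠 i * 𝐠⁻¹ i = 1 := by
  rw [GInv_eq, mul_add, mul_smul_comm, mul_smul_comm, G_mul_self h1 h2, mul_one]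
  linear_combination (norm := module) hq • (𝐠 i + 1)

theorem GInv_mul_G (hq : q * qi = 1) {i : ℕ} (h1 : 1 ≤ i) (h2 : i < n) :
    𝐠⁻¹ i * 𝐠 i = 1 :=
  (semiconjBy_GInv (Commute.refl (𝐠 i))).eq.symm.trans (G_mul_GInv hq h1 h2)

theorem semiconjBy_GInv_mul_GInv (hq : q * qi = 1) {i : ℕ} (h1 : 1 ≤ i) (h2 : i + 2 ≤ n) :
    SemiconjBy (𝐠⁻¹ i * 𝐠⁻¹ (i + 1)) (𝐠 i) (𝐠 (i + 1)) := by
  let a : (QBr R n q qi r δ)ˣ :=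
    ⟨𝐠 i, 𝐠⁻¹ i, G_mul_GInv hq h1 (by omega), GInv_mul_G hq h1 (by omega)⟩
  let b : (QBr R n q qi r δ)ˣ :=
    ⟨𝐠 (i + 1), 𝐠⁻¹ (i + 1), G_mul_GInv hq (by omega) (by omega),
      GInv_mul_G hq (by omega) (by omega)⟩
  have hab : SemiconjBy (a * b) a b := Units.ext (semiconjBy_G_mul_G i)
  simpa [SemiconjBy, a, b] using congrArg Units.val (semiconjBy_inv_mul_inv_of_braid hab)

theorem ga_eq_prod (a b : ℕ) : 𝐆 a b = ((List.Ico a (b + 1)).map 𝐠).prod := rfl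

theorem gaInv_eq_prod (a b : ℕ) : 𝐆⁻¹ a b = ((List.Ico a (b + 1)).map 𝐠⁻¹).prod := rfl

theorem ga_of_lt {a b : ℕ} (h : b < a) : 𝐆 a b = 1 := by
  simp [ga_eq_prod, List.Ico.eq_nil_of_le (show b + 1 ≤ a by omega)]

theorem gaInv_of_lt {a b : ℕ} (h : b < a) : 𝐆⁻¹ a b = 1 := by
  simp [gaInv_eq_prod, List.Ico.eq_nil_of_le (show b + 1 ≤ a by omega)]

theorem ga_eq_G_mul {a b : ℕ} (h : a ≤ b) : 𝐆 a b = 𝐠 a * 𝐆 (a + 1) b := by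
  simp [ga_eq_prod, List.Ico.eq_cons (show a < b + 1 by omega)]

theorem gaInv_eq_GInv_mul {a b : ℕ} (h : a ≤ b) : 𝐆⁻¹ a b = 𝐠⁻¹ a * 𝐆⁻¹ (a + 1) b := by
  simp [gaInv_eq_prod, List.Ico.eq_cons (show a < b + 1 by omega)]

theorem ga_succ {a b : ℕ} (h : a ≤ b + 1) : 𝐆 a (b + 1) = 𝐆 a b * 𝐠 (b + 1) := by
  simp [ga_eq_prod, List.Ico.succ_top (show a ≤ b + 1 by omega)]

theorem gaInv_succ {a b : ℕ} (h : a ≤ b + 1) : 𝐆⁻¹ a (b + 1) = 𝐆⁻¹ a b * 𝐠⁻¹ (b + 1) := by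
  simp [gaInv_eq_prod, List.Ico.succ_top (show a ≤ b + 1 by omega)]

theorem commute_ga {x : QBr R n q qi r δ} {a b : ℕ}
    (h : ∀ j, a ≤ j → j ≤ b → Commute x (𝐠 j)) : Commute x (𝐆 a b) :=
  Commute.list_prod_right _ _ <| List.forall_mem_map.2 fun j hj =>
    h j (List.Ico.mem.1 hj).1 (Nat.le_of_lt_succ (List.Ico.mem.1 hj).2)

theorem commute_gaInv {x : QBr R n q qi r δ} {a b : ℕ}
    (h : ∀ j, a ≤ j → j ≤ b → Commute x (𝐠 j)) : Commute x (𝐆⁻¹ a b) :=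
  Commute.list_prod_right _ _ <| List.forall_mem_map.2 fun j hj =>
    semiconjBy_GInv (h j (List.Ico.mem.1 hj).1 (Nat.le_of_lt_succ (List.Ico.mem.1 hj).2))

theorem semiconjBy_ga {a b i : ℕ} (hai : a ≤ i) (hib : i < b) :
    SemiconjBy (𝐆 a b) (𝐠 i) (𝐠 (i + 1)) :=
  semiconjBy_prod_Ico_of_braid hai (by omega) (semiconjBy_G_mul_G i)
    (fun _ _ hj => commute_G (by omega)) (fun _ hj _ => (commute_G hj).symm)

theorem semiconjBy_gaInv (hq : q * qi = 1) {a b i : ℕ} (ha : 1 ≤ a) (hai : a ≤ i)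
    (hib : i < b) (hb : b < n) : SemiconjBy (𝐆⁻¹ a b) (𝐠 i) (𝐠 (i + 1)) :=
  semiconjBy_prod_Ico_of_braid hai (by omega) (semiconjBy_GInv_mul_GInv hq (by omega) (by omega))
    (fun _ _ hj => (semiconjBy_GInv (commute_G (by omega)).symm).symm)
    (fun _ hj _ => (semiconjBy_GInv (commute_G hj)).symm)

def w (m : ℕ) : QBr R n q qi r δ := 𝐆 2 (2 * m + 1) * 𝐆⁻¹ 1 (2 * m)

def wShift (m : ℕ) : QBr R n q qi r δ := 𝐆 4 (2 * m + 3) * 𝐆⁻¹ 3 (2 * m + 2)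

theorem ek_succ (k : ℕ) : 𝐞₍k + 1₎ = 𝐞 * w k * 𝐞₍k₎ := by
  rw [ek, w, mul_assoc 𝐞]

theorem ek_one : 𝐞₍1₎ = 𝐞 := by
  rw [ek_succ, w, ga_of_lt (by omega), gaInv_of_lt (by omega), ek, mul_one, mul_one, mul_one]

theorem w_zero : (w 0 : QBr R n q qi r δ) = 1 := by
  rw [w, ga_of_lt (by omega), gaInv_of_lt (by omega), mul_one]

theorem w_one : (w 1 : QBr R n q qi r δ) = 𝐠 2 * 𝐠 3 * 𝐠⁻¹ 1 * 𝐠⁻¹ 2 := by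
  rw [w, ga_eq_G_mul (by omega), ga_eq_G_mul (by omega), ga_of_lt (by omega),
    gaInv_eq_GInv_mul (by omega), gaInv_eq_GInv_mul (by omega), gaInv_of_lt (by omega)]
  simp only [mul_one, mul_assoc]

theorem w_succ_eq_w_one_mul (m : ℕ) : (w (m + 1) : QBr R n q qi r δ) = w 1 * wShift m := by
  have hA1 : Commute (𝐆 4 (2 * m + 3)) (𝐠⁻¹ 1) :=
    semiconjBy_GInv (commute_ga fun j hj _ => commute_G (i := 1) (j := j) (by omega)).symm
  have hA2 : Commute (𝐆 4 (2 * m + 3)) (𝐠⁻¹ 2) :=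
    semiconjBy_GInv (commute_ga fun j hj _ => commute_G (i := 2) (j := j) (by omega)).symm
  rw [w, w_one, wShift, show 2 * (m + 1) + 1 = 2 * m + 3 by ring,
    show 2 * (m + 1) = 2 * m + 2 by ring, ga_eq_G_mul (by omega), ga_eq_G_mul (a := 3) (by omega),
    gaInv_eq_GInv_mul (by omega), gaInv_eq_GInv_mul (a := 2) (by omega)]
  simp only [mul_assoc, Nat.reduceAdd]
  rw [hA1.left_comm, hA2.left_comm]

theorem w_succ_eq_w_mul (m : ℕ) : (w (m + 1) : QBr R n q qi r δ) =
    w m * (𝐠 (2 * m + 2) * 𝐠 (2 * m + 3) * 𝐠⁻¹ (2 * m + 1) * 𝐠⁻¹ (2 * m + 2)) := by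
  have hga : 𝐆 2 (2 * (m + 1) + 1) = 𝐆 2 (2 * m + 1) * 𝐠 (2 * m + 2) * 𝐠 (2 * m + 3) := by
    rw [show 2 * (m + 1) + 1 = 2 * m + 1 + 1 + 1 by ring, ga_succ (b := 2 * m + 1 + 1) (by omega),
      ga_succ (b := 2 * m + 1) (by omega)]
  have hgaInv : 𝐆⁻¹ 1 (2 * (m + 1)) = 𝐆⁻¹ 1 (2 * m) * 𝐠⁻¹ (2 * m + 1) * 𝐠⁻¹ (2 * m + 2) := by
    rw [show 2 * (m + 1) = 2 * m + 1 + 1 by ring, gaInv_succ (b := 2 * m + 1) (by omega),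
      gaInv_succ (b := 2 * m) (by omega)]
  have hB2 : Commute (𝐠 (2 * m + 2)) (𝐆⁻¹ 1 (2 * m)) :=
    commute_gaInv fun _ _ hj => (commute_G (by omega)).symm
  have hB3 : Commute (𝐠 (2 * m + 3)) (𝐆⁻¹ 1 (2 * m)) :=
    commute_gaInv fun _ _ hj => (commute_G (by omega)).symm
  rw [w, w, hga, hgaInv]
  simp only [mul_assoc]
  rw [hB3.left_comm, hB2.left_comm]

theorem semiconjBy_w_G (hq : q * qi = 1) {m i : ℕ} (hi : 1 ≤ i) (him : i < 2 * m)
    (hm : 2 * m < n) : SemiconjBy (w m) (𝐠 i) (𝐠 (i + 2)) :=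
  (semiconjBy_ga (a := 2) (b := 2 * m + 1) (i := i + 1) (by omega) (by omega)).mul_left
    (semiconjBy_gaInv hq le_rfl hi him hm)

theorem semiconjBy_w_ga (hq : q * qi = 1) {m a b : ℕ} (ha : 1 ≤ a) (hb : b < 2 * m)
    (hm : 2 * m < n) : SemiconjBy (w m) (𝐆 a b) (𝐆 (a + 2) (b + 2)) := by
  have := SemiconjBy.list_prod_map (a := w m) (f := 𝐠) (g := fun j => 𝐠 (j + 2))
    (l := List.Ico a (b + 1)) fun j hj => by
      obtain ⟨hj1, hj2⟩ := List.Ico.mem.1 hj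
      exact semiconjBy_w_G hq (by omega) (by omega) hm
  rwa [prod_map_Ico_add] at this

theorem semiconjBy_w_gaInv (hq : q * qi = 1) {m a b : ℕ} (ha : 1 ≤ a) (hb : b < 2 * m)
    (hm : 2 * m < n) : SemiconjBy (w m) (𝐆⁻¹ a b) (𝐆⁻¹ (a + 2) (b + 2)) := by
  have := SemiconjBy.list_prod_map (a := w m) (f := 𝐠⁻¹) (g := fun j => 𝐠⁻¹ (j + 2))
    (l := List.Ico a (b + 1)) fun j hj => by
      obtain ⟨hj1, hj2⟩ := List.Ico.mem.1 hj
      exact semiconjBy_GInv (semiconjBy_w_G hq (by omega) (by omega) hm)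
  rwa [prod_map_Ico_add] at this

theorem semiconjBy_w_w (hq : q * qi = 1) {m j : ℕ} (hjm : j < m) (hm : 2 * m < n) :
    SemiconjBy (w m : QBr R n q qi r δ) (w j) (wShift j) :=
  SemiconjBy.mul_right (semiconjBy_w_ga hq (a := 2) (b := 2 * j + 1) (by omega) (by omega) hm)
    (semiconjBy_w_gaInv hq (a := 1) (b := 2 * j) le_rfl (by omega) hm)

theorem commute_E_wShift (m : ℕ) : Commute 𝐞 (wShift m) :=
  (commute_ga fun _ hj _ => commute_E_G (by omega)).mul_right
    (commute_gaInv fun _ hj _ => commute_E_G (by omega))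

theorem commute_G_w {m i : ℕ} (h : 2 * m + 3 ≤ i) : Commute (𝐠 i) (w m) :=
  (commute_ga fun _ _ hj => (commute_G (by omega)).symm).mul_right
    (commute_gaInv fun _ _ hj => (commute_G (by omega)).symm)

theorem commute_ek_G {k i : ℕ} (h : 2 * k + 1 ≤ i) : Commute 𝐞₍k₎ (𝐠 i) := by
  induction k with
  | zero => exact Commute.one_left _
  | succ k ih =>
    rw [ek_succ]
    exact ((commute_E_G (by omega)).mul_left (commute_G_w (by omega)).symm).mul_left (ih (by omega))

theorem E_mul_ek {k : ℕ} (hk : 1 ≤ k) : 𝐞 * 𝐞₍k₎ = δ • 𝐞₍k₎ := by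
  obtain ⟨k, rfl⟩ := Nat.exists_eq_add_of_le' hk
  rw [ek_succ, ← mul_assoc, ← mul_assoc, E_mul_E, smul_mul_assoc, smul_mul_assoc]

theorem ek_mul_E {k : ℕ} (hk : 1 ≤ k) : 𝐞₍k₎ * 𝐞 = δ • 𝐞₍k₎ := by
  induction k, hk using Nat.le_induction with
  | base => rw [ek_one, E_mul_E]
  | succ k _ ih => rw [ek_succ, mul_assoc, ih, mul_smul_comm]

theorem w_one_mul_E_mul_w_one_mul_E (h : 4 ≤ n) :
    (w 1 * 𝐞 * w 1 * 𝐞 : QBr R n q qi r δ) = 𝐞 * w 1 * 𝐞 := by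
  simpa [w_one, fE2w, E, G, GInv, mul_assoc] using
    RingQuot.mkAlgHom_rel R (BrRel.e3l (q := q) (qi := qi) (r := r) (δ := δ) h)

theorem E_mul_w_one_mul_E_mul_w_one (h : 4 ≤ n) :
    (𝐞 * w 1 * 𝐞 * w 1 : QBr R n q qi r δ) = 𝐞 * w 1 * 𝐞 := by
  simpa [w_one, fE2w, E, G, GInv, mul_assoc] using
    RingQuot.mkAlgHom_rel R (BrRel.e3r (q := q) (qi := qi) (r := r) (δ := δ) h)

theorem E_mul_w_succ_mul_E (m : ℕ) :
    (𝐞 * w (m + 1) * 𝐞 : QBr R n q qi r δ) = 𝐞 * w 1 * 𝐞 * wShift m := by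
  rw [w_succ_eq_w_one_mul m, ← mul_assoc, mul_assoc _ (wShift m), ← (commute_E_wShift m).eq,
    ← mul_assoc]

theorem w_one_mul_E_mul_w_succ_mul_E (h : 4 ≤ n) (m : ℕ) :
    (w 1 * 𝐞 * w (m + 1) * 𝐞 : QBr R n q qi r δ) = 𝐞 * w (m + 1) * 𝐞 := by
  calc (w 1 * 𝐞 * w (m + 1) * 𝐞 : QBr R n q qi r δ)
      = w 1 * (𝐞 * w (m + 1) * 𝐞) := by simp only [mul_assoc]
    _ = w 1 * 𝐞 * w 1 * 𝐞 * wShift m := by rw [E_mul_w_succ_mul_E]; simp only [mul_assoc]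
    _ = 𝐞 * w (m + 1) * 𝐞 := by rw [w_one_mul_E_mul_w_one_mul_E h, E_mul_w_succ_mul_E m]

theorem E_mul_w_succ_mul_E_mul_w_succ (hq : q * qi = 1) {j : ℕ} (hn : 2 * j + 4 ≤ n) :
    (𝐞 * w (j + 1) * 𝐞 * w (j + 1) : QBr R n q qi r δ) = 𝐞 * w (j + 1) * 𝐞 * w j := by
  rw [E_mul_w_succ_mul_E j, mul_assoc (𝐞 * w 1 * 𝐞),
    ← (semiconjBy_w_w hq (Nat.lt_succ_self j) (by omega)).eq, w_succ_eq_w_one_mul j,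
    ← mul_assoc, ← mul_assoc, E_mul_w_one_mul_E_mul_w_one (by omega)]

theorem w_succ_mul_E_mul_w (hq : q * qi = 1) {j m : ℕ} (hjm : j < m) (hm : 2 * m < n) :
    (w (j + 1) * 𝐞 * w m : QBr R n q qi r δ) = w 1 * 𝐞 * w m * w j := by
  rw [w_succ_eq_w_one_mul j, mul_assoc (w 1), ← (commute_E_wShift j).eq, ← mul_assoc,
    mul_assoc (w 1 * 𝐞), ← (semiconjBy_w_w hq hjm hm).eq, ← mul_assoc]

theorem w_one_mul_ek (h : 4 ≤ n) {k : ℕ} (hk : 2 ≤ k) : w 1 * 𝐞₍k₎ = 𝐞₍k₎ := by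
  obtain ⟨m, rfl⟩ : ∃ m, k = m + 1 + 1 := ⟨k - 2, by omega⟩
  rw [ek_succ, ek_succ]
  simp only [← mul_assoc]
  rw [w_one_mul_E_mul_w_succ_mul_E h]

theorem w_mul_ek (hq : q * qi = 1) {j k : ℕ} (hjk : j < k) (hn : 2 * k ≤ n) :
    w j * 𝐞₍k₎ = 𝐞₍k₎ := by
  induction j generalizing k with
  | zero => rw [w_zero, one_mul]
  | succ j ih =>
    obtain ⟨k, rfl⟩ : ∃ k', k = k' + 1 := ⟨k - 1, by omega⟩
    calc w (j + 1) * 𝐞₍k + 1₎ = w (j + 1) * 𝐞 * w k * 𝐞₍k₎ := by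
          rw [ek_succ]; simp only [mul_assoc]
      _ = w 1 * 𝐞 * w k * (w j * 𝐞₍k₎) := by
          rw [w_succ_mul_E_mul_w hq (by omega) (by omega), mul_assoc]
      _ = w 1 * 𝐞₍k + 1₎ := by rw [ih (by omega) (by omega), ek_succ]; simp only [mul_assoc]
      _ = 𝐞₍k + 1₎ := w_one_mul_ek (by omega) (by omega)

theorem ek_succ_mul_w (hq : q * qi = 1) {j : ℕ} (hn : 2 * j + 2 ≤ n) :
    𝐞₍j + 1₎ * w j = 𝐞₍j + 1₎ := by
  induction j with
  | zero => rw [w_zero, mul_one]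
  | succ j ih =>
    have hs :
        Commute 𝐞₍j₎ (𝐠 (2 * j + 2) * 𝐠 (2 * j + 3) * 𝐠⁻¹ (2 * j + 1) * 𝐠⁻¹ (2 * j + 2)) :=
      (((commute_ek_G (by omega)).mul_right (commute_ek_G (by omega))).mul_right
        (semiconjBy_GInv (commute_ek_G (by omega)))).mul_right
        (semiconjBy_GInv (commute_ek_G (by omega)))
    have h1 : 𝐞₍j + 1₎ * w (j + 1) = 𝐞 * w (j + 1) * 𝐞₍j₎ := by
      rw [w_succ_eq_w_mul, ← mul_assoc, ih (by omega), ek_succ, mul_assoc (𝐞 * w j), hs.eq,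
        ← mul_assoc, mul_assoc 𝐞 (w j), ← w_succ_eq_w_mul]
    calc 𝐞₍j + 1 + 1₎ * w (j + 1) = 𝐞 * w (j + 1) * (𝐞₍j + 1₎ * w (j + 1)) := by
          rw [ek_succ (j + 1)]; simp only [mul_assoc]
      _ = 𝐞 * w (j + 1) * 𝐞 * w (j + 1) * 𝐞₍j₎ := by rw [h1]; simp only [mul_assoc]
      _ = 𝐞 * w (j + 1) * 𝐞 * w j * 𝐞₍j₎ := by
          rw [E_mul_w_succ_mul_E_mul_w_succ hq (by omega)]
      _ = 𝐞₍j + 1 + 1₎ := by rw [ek_succ (j + 1), ek_succ j]; simp only [mul_assoc]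

theorem ek_mul_w (hq : q * qi = 1) {j k : ℕ} (hjk : j < k) (hn : 2 * k ≤ n) :
    𝐞₍k₎ * w j = 𝐞₍k₎ := by
  induction k, hjk using Nat.le_induction with
  | base => exact ek_succ_mul_w hq hn
  | succ k _ ih => rw [ek_succ, mul_assoc, ih (by omega)]

theorem ek_mul_ek_of_le (hq : q * qi = 1) {j k : ℕ} (hjk : j ≤ k) (hn : 2 * k ≤ n) :
    𝐞₍j₎ * 𝐞₍k₎ = δ ^ j • 𝐞₍k₎ := by
  induction j with
  | zero => rw [ek, one_mul, pow_zero, one_smul]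
  | succ j ih =>
    rw [ek_succ, mul_assoc, ih (by omega), mul_smul_comm, mul_assoc, w_mul_ek hq (by omega) hn,
      E_mul_ek (by omega), smul_smul, pow_succ]

theorem ek_mul_ek_of_ge (hq : q * qi = 1) {j k : ℕ} (hjk : j ≤ k) (hn : 2 * k ≤ n) :
    𝐞₍k₎ * 𝐞₍j₎ = δ ^ j • 𝐞₍k₎ := by
  induction j with
  | zero => rw [ek, mul_one, pow_zero, one_smul]
  | succ j ih =>
    rw [ek_succ, ← mul_assoc, ← mul_assoc, ek_mul_E (by omega), smul_mul_assoc, smul_mul_assoc,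
      ek_mul_w hq (by omega) hn, ih (by omega), smul_smul, pow_succ']

end
end qB

open qB in
theorem stmt9_general (R : Type) [CommRing R] (n : ℕ) (q qi r δ : R)
    (hq : q * qi = 1)
    (j k : ℕ) (h2 : j ≤ k) (h3 : 2 * k ≤ n) :
    ek R n q qi r δ j * ek R n q qi r δ k = δ ^ j • ek R n q qi r δ k ∧
    ek R n q qi r δ k * ek R n q qi r δ j = δ ^ j • ek R n q qi r δ k :=
  ⟨ek_mul_ek_of_le hq h2 h3, ek_mul_ek_of_ge hq h2 h3⟩

open qB in
/-- `e_(j) e_(k) = e_(k) e_(j) = δ^j e_(k)` for `1 ≤ j ≤ k`, `2k ≤ n`. -/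
theorem stmt9 (R : Type) [CommRing R] (n : ℕ) (q qi r ri δ : R)
    (hq : q * qi = 1) (hr : r * ri = 1) (hδ : (q - 1) * δ = r - 1)
    (j k : ℕ) (h1 : 1 ≤ j) (h2 : j ≤ k) (h3 : 2 * k ≤ n) :
    ek R n q qi r δ j * ek R n q qi r δ k = δ ^ j • ek R n q qi r δ k ∧
    ek R n q qi r δ k * ek R n q qi r δ j = δ ^ j • ek R n q qi r δ k :=
  stmt9_general R n q qi r δ hq j k h2 h3
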